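/- Let p ≥ 1 and let q be an odd integer with 1 ≤ q < 2p and gcd(q, 2p) = 1. For 1 ≤ j ≤ 2p−1 set ε_j = (−1)^{⌊jq/(2p)⌋}, and let k be the number of indices j with 1 ≤ j ≤ 2p−2 such that ε_j = −1. Let X, X' be matrices in SL_2(C) with tr(X) = tr(X') = 0, set ȳ = −tr(XX'), and let W = (X')^{ε_1}·X^{ε_2}·(X')^{ε_3}·⋯·X^{ε_{2p−2}}·(X')^{ε_{2p−1}} be the alternating word (letters with odd index are powers of X', letters with even index are powers of X). Then tr(X^{-1}·W·X·(X')^{-1}) − tr(W·(X')^{-1}) = (−1)^{k+p−1}·(ȳ² − 4)·S_{p−1}(ȳ), where S_n denotes the Chebyshev polynomials defined by S_0(y) = 1, S_1(y) = y, S_{n+1}(y) = y·S_n(y) − S_{n−1}(y). -/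

import Mathlib

/-!
A traceless element of `SL₂` squares to `-1` by Cayley–Hamilton, so `X^{±1} = ±X` and the
relator word collapses to `(-1)^k • (X'X)^{p-1} X'`; the last sign `ε_{2p-1}` is `+1` because
`q` is odd. With `D = X'X`, the two traces become `(-1)^k tr D^{p+1}` and `(-1)^k tr D^{p-1}`,
and Cayley–Hamilton for `D` (determinant `1`, trace `t = -ȳ`) gives
`tr D^{n+2} - tr D^n = (t² - 4) S_n(t)`.
-/

open Matrix

/-- The Chebyshev polynomials `S_n`, as functions `ℂ → ℂ`:
`S_0(y) = 1`, `S_1(y) = y`, `S_{n+1}(y) = y·S_n(y) − S_{n−1}(y)`. -/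
noncomputable def chebS : ℕ → ℂ → ℂ
  | 0 => fun _ => 1
  | 1 => fun y => y
  | (n + 2) => fun y => y * chebS (n + 1) y - chebS n y

/-- The sign `ε_j = (−1)^{⌊jq/(2p)⌋}` appearing in the relator word of the
two-bridge link `b(2p, q)`. -/
def twoBridgeSign (p q j : ℕ) : ℤ := (-1) ^ ((j * q) / (2 * p))

/-- The relator word `W = (X')^{ε_1}·X^{ε_2}·(X')^{ε_3}·⋯·X^{ε_{2p−2}}·(X')^{ε_{2p−1}}`:
letters with odd index are powers of `X'`, letters with even index are powers of `X`. -/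
def twoBridgeWord (p q : ℕ) (X X' : Matrix.SpecialLinearGroup (Fin 2) ℂ) :
    Matrix.SpecialLinearGroup (Fin 2) ℂ :=
  ((List.range (2 * p - 1)).map fun i =>
    (if (i + 1) % 2 = 1 then X' else X) ^ twoBridgeSign p q (i + 1)).prod

theorem Finset.prod_range_eq_list_prod {M : Type*} [CommMonoid M] (f : ℕ → M) (n : ℕ) :
    ∏ i ∈ Finset.range n, f i = ((List.range n).map f).prod := by
  rw [Finset.prod_eq_multiset_prod, Finset.range_val, Multiset.range, Multiset.map_coe,
    Multiset.prod_coe]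

theorem Finset.prod_Icc_one_eq_prod_range {M : Type*} [CommMonoid M] (f : ℕ → M) (n : ℕ) :
    ∏ j ∈ Finset.Icc 1 n, f j = ∏ i ∈ Finset.range n, f (i + 1) := by
  rw [← Finset.Ico_add_one_right_eq_Icc, Finset.prod_Ico_eq_prod_range, Nat.add_sub_cancel]
  simp only [add_comm]

theorem Finset.prod_eq_neg_one_pow_card_filter {ι : Type*} (s : Finset ι) (f : ι → ℤ)
    (hf : ∀ j ∈ s, f j = 1 ∨ f j = -1) :
    ∏ j ∈ s, f j = (-1) ^ (s.filter fun j => f j = -1).card := by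
  calc ∏ j ∈ s, f j = ∏ j ∈ s, if f j = -1 then -1 else 1 := by
        refine Finset.prod_congr rfl fun j hj => ?_
        rcases hf j hj with h | h <;> simp [h]
    _ = _ := by rw [Finset.prod_ite, Finset.prod_const, Finset.prod_const_one, mul_one]

theorem List.prod_map_smul {ι R A : Type*} [Monoid R] [Monoid A] [MulAction R A]
    [IsScalarTower R A A] [SMulCommClass R A A] (l : List ι) (c : ι → R) (f : ι → A) :
    (l.map fun i => c i • f i).prod = (l.map c).prod • (l.map f).prod := by
  induction l with
  | nil => simp
  | cons i l ih => simp only [List.map_cons, List.prod_cons, ih, smul_mul_smul_comm]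

theorem List.prod_map_range_alternating {M : Type*} [Monoid M] (a b : M) (n : ℕ) :
    ((List.range (2 * n + 1)).map fun i => if (i + 1) % 2 = 1 then b else a).prod
      = (b * a) ^ n * b := by
  induction n with
  | zero => simp
  | succ n ih =>
    rw [show 2 * (n + 1) + 1 = 2 * n + 1 + 1 + 1 by ring, List.range_succ, List.range_succ,
      List.map_append, List.map_append, List.prod_append, List.prod_append, ih]
    simp only [List.map_singleton, List.prod_singleton, pow_succ, mul_assoc,
      if_neg (show ¬(2 * n + 1 + 1) % 2 = 1 by omega),
      if_pos (show (2 * n + 1 + 1 + 1) % 2 = 1 by omega)]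

theorem chebS_neg (n : ℕ) (y : ℂ) : chebS n (-y) = (-1) ^ n * chebS n y := by
  induction n using Nat.twoStepInduction with
  | zero => simp [chebS]
  | one => simp [chebS]
  | more n ih₀ ih₁ =>
    simp only [chebS, ih₀, ih₁]
    ring

namespace Matrix

theorem mul_self_fin_two {R : Type*} [CommRing R] (A : Matrix (Fin 2) (Fin 2) R) :
    A * A = A.trace • A - A.det • 1 := by
  ext i j
  fin_cases i <;> fin_cases j <;>
    simp [mul_apply, trace_fin_two, det_fin_two] <;> ring

theorem trace_pow_add_two_fin_two {R : Type*} [CommRing R] (A : Matrix (Fin 2) (Fin 2) R)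
    (n : ℕ) : (A ^ (n + 2)).trace = A.trace * (A ^ (n + 1)).trace - A.det * (A ^ n).trace := by
  rw [pow_add, sq, mul_self_fin_two, pow_succ]
  simp [mul_sub, trace_sub, trace_smul]

theorem trace_pow_add_two_sub_trace_pow_eq_chebS {A : Matrix (Fin 2) (Fin 2) ℂ} (hA : A.det = 1)
    (n : ℕ) :
    (A ^ (n + 2)).trace - (A ^ n).trace = (A.trace ^ 2 - 4) * chebS n A.trace := by
  induction n using Nat.twoStepInduction with
  | zero => simp [trace_pow_add_two_fin_two, hA, chebS]; ring
  | one => simp [trace_pow_add_two_fin_two, hA, chebS]; ring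
  | more n ih₀ ih₁ =>
    have e₁ := trace_pow_add_two_fin_two A (n + 2)
    have e₀ := trace_pow_add_two_fin_two A n
    rw [hA] at e₀ e₁
    simp only [chebS]
    linear_combination e₁ - e₀ + A.trace * ih₁ - ih₀

end Matrix

namespace Matrix.SpecialLinearGroup

variable {R : Type*} [CommRing R] {X : SpecialLinearGroup (Fin 2) R}

theorem coe_mul_self_of_trace_eq_zero (hX : trace (X : Matrix (Fin 2) (Fin 2) R) = 0) :
    (X : Matrix (Fin 2) (Fin 2) R) * X = -1 := by
  simp [mul_self_fin_two, hX, X.det_coe]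

theorem coe_inv_of_trace_eq_zero (hX : trace (X : Matrix (Fin 2) (Fin 2) R) = 0) :
    ((X⁻¹ : SpecialLinearGroup (Fin 2) R) : Matrix (Fin 2) (Fin 2) R) = -X :=
  calc ((X⁻¹ : SpecialLinearGroup (Fin 2) R) : Matrix (Fin 2) (Fin 2) R)
      = ↑X⁻¹ * -(X * X : Matrix (Fin 2) (Fin 2) R) := by
        rw [coe_mul_self_of_trace_eq_zero hX, neg_neg, mul_one]
    _ = -X := by rw [mul_neg, ← mul_assoc, ← coe_mul, inv_mul_cancel, coe_one, one_mul]

theorem coe_zpow_of_trace_eq_zero (hX : trace (X : Matrix (Fin 2) (Fin 2) R) = 0) {ε : ℤ}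
    (hε : ε = 1 ∨ ε = -1) :
    ((X ^ ε : SpecialLinearGroup (Fin 2) R) : Matrix (Fin 2) (Fin 2) R) = (ε : R) • X := by
  rcases hε with rfl | rfl
  · simp
  · simp [coe_inv_of_trace_eq_zero hX]

theorem trace_conj_mul_inv_sub_trace_mul_inv {X' W : SpecialLinearGroup (Fin 2) R}
    (hX : trace (X : Matrix (Fin 2) (Fin 2) R) = 0)
    (hX' : trace (X' : Matrix (Fin 2) (Fin 2) R) = 0) {c : R} {m : ℕ}
    (hW : (W : Matrix (Fin 2) (Fin 2) R)
      = c • ((X' * X : Matrix (Fin 2) (Fin 2) R) ^ m * X')) :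
    trace ((X⁻¹ * W * X * X'⁻¹ : SpecialLinearGroup (Fin 2) R) : Matrix (Fin 2) (Fin 2) R)
      - trace ((W * X'⁻¹ : SpecialLinearGroup (Fin 2) R) : Matrix (Fin 2) (Fin 2) R)
      = c * (trace ((X' * X : Matrix (Fin 2) (Fin 2) R) ^ (m + 2))
        - trace ((X' * X : Matrix (Fin 2) (Fin 2) R) ^ m)) := by
  have hB := coe_mul_self_of_trace_eq_zero hX'
  simp only [coe_mul, coe_inv_of_trace_eq_zero hX, coe_inv_of_trace_eq_zero hX', hW]
  generalize (X : Matrix (Fin 2) (Fin 2) R) = A, (X' : Matrix (Fin 2) (Fin 2) R) = B at hB ⊢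
  have hconj :
      -A * (c • ((B * A) ^ m * B)) * A * -B = c • (A * ((B * A) ^ (m + 1) * B)) := by
    simp only [neg_mul, mul_neg, smul_neg, neg_neg, smul_mul_assoc, mul_smul_comm, pow_succ,
      mul_assoc]
  have hcancel : c • ((B * A) ^ m * B) * -B = c • (B * A) ^ m := by
    rw [mul_neg, smul_mul_assoc, mul_assoc, hB, mul_neg_one, smul_neg, neg_neg]
  rw [hconj, hcancel, trace_smul, trace_smul, trace_mul_comm, smul_eq_mul, smul_eq_mul, mul_sub,
    pow_succ _ (m + 1), mul_assoc]

end Matrix.SpecialLinearGroup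

theorem twoBridgeSign_eq_one_or_eq_neg_one (p q j : ℕ) :
    twoBridgeSign p q j = 1 ∨ twoBridgeSign p q j = -1 :=
  neg_one_pow_eq_or ℤ _

theorem twoBridgeSign_two_mul_sub_one {p q : ℕ} (hq : Odd q) (hqp : q < 2 * p) :
    twoBridgeSign p q (2 * p - 1) = 1 := by
  obtain ⟨r, rfl⟩ := hq
  -- `(2p - 1) q = (q - 1) · 2p + (2p - q)` with `0 < 2p - q < 2p`
  have hdiv : (2 * p - 1) * (2 * r + 1) / (2 * p) = 2 * r := by
    apply Nat.div_eq_of_lt_le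
    · zify [show 1 ≤ 2 * p by omega]; nlinarith
    · zify [show 1 ≤ 2 * p by omega]; nlinarith
  rw [twoBridgeSign, hdiv, pow_mul, neg_one_sq, one_pow]

theorem prod_twoBridgeSign_eq_neg_one_pow {p q : ℕ} (hq : Odd q) (hqp : q < 2 * p) :
    ∏ j ∈ Finset.Icc 1 (2 * p - 1), twoBridgeSign p q j
      = (-1) ^ ((Finset.Icc 1 (2 * p - 2)).filter fun j => twoBridgeSign p q j = -1).card := by
  rw [show 2 * p - 1 = 2 * p - 2 + 1 by omega, Finset.prod_Icc_succ_top (by omega),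
    show 2 * p - 2 + 1 = 2 * p - 1 by omega, twoBridgeSign_two_mul_sub_one hq hqp, mul_one,
    Finset.prod_eq_neg_one_pow_card_filter _ _ fun j _ =>
      twoBridgeSign_eq_one_or_eq_neg_one p q j]

theorem coe_twoBridgeWord {p : ℕ} (hp : 1 ≤ p) (q : ℕ) {X X' : SpecialLinearGroup (Fin 2) ℂ}
    (hX : trace (X : Matrix (Fin 2) (Fin 2) ℂ) = 0)
    (hX' : trace (X' : Matrix (Fin 2) (Fin 2) ℂ) = 0) :
    (twoBridgeWord p q X X' : Matrix (Fin 2) (Fin 2) ℂ)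
      = (∏ j ∈ Finset.Icc 1 (2 * p - 1), (twoBridgeSign p q j : ℂ)) •
        ((X' * X : Matrix (Fin 2) (Fin 2) ℂ) ^ (p - 1) * X') := by
  obtain ⟨m, rfl⟩ : ∃ m, p = m + 1 := ⟨p - 1, by omega⟩
  have hletter (i : ℕ) :
      (((if (i + 1) % 2 = 1 then X' else X) ^ twoBridgeSign (m + 1) q (i + 1) :
        SpecialLinearGroup (Fin 2) ℂ) : Matrix (Fin 2) (Fin 2) ℂ)
        = (twoBridgeSign (m + 1) q (i + 1) : ℂ) •
          if (i + 1) % 2 = 1 then (X' : Matrix (Fin 2) (Fin 2) ℂ) else X := by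
    have hε := twoBridgeSign_eq_one_or_eq_neg_one (m + 1) q (i + 1)
    split_ifs
    · exact SpecialLinearGroup.coe_zpow_of_trace_eq_zero hX' hε
    · exact SpecialLinearGroup.coe_zpow_of_trace_eq_zero hX hε
  rw [twoBridgeWord, ← SpecialLinearGroup.coeMonoidHom_apply, map_list_prod, List.map_map,
    show 2 * (m + 1) - 1 = 2 * m + 1 by omega, Function.comp_def]
  simp only [SpecialLinearGroup.coeMonoidHom_apply, hletter]
  rw [List.prod_map_smul, List.prod_map_range_alternating, Finset.prod_Icc_one_eq_prod_range,
    Finset.prod_range_eq_list_prod, Nat.add_sub_cancel]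

theorem twoBridge_trace_difference_general (p q : ℕ) (hq_odd : Odd q)
    (hq2 : q < 2 * p)
    (X X' : Matrix.SpecialLinearGroup (Fin 2) ℂ)
    (hX : Matrix.trace (X : Matrix (Fin 2) (Fin 2) ℂ) = 0)
    (hX' : Matrix.trace ((X' : Matrix (Fin 2) (Fin 2) ℂ)) = 0)
    (y : ℂ)
    (hy : y = -Matrix.trace ((X * X' : Matrix.SpecialLinearGroup (Fin 2) ℂ) :
      Matrix (Fin 2) (Fin 2) ℂ))
    (k : ℕ)
    (hk : k = ((Finset.Icc 1 (2 * p - 2)).filter fun j => twoBridgeSign p q j = -1).card) :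
    Matrix.trace ((X⁻¹ * twoBridgeWord p q X X' * X * X'⁻¹ :
        Matrix.SpecialLinearGroup (Fin 2) ℂ) : Matrix (Fin 2) (Fin 2) ℂ) -
      Matrix.trace ((twoBridgeWord p q X X' * X'⁻¹ :
        Matrix.SpecialLinearGroup (Fin 2) ℂ) : Matrix (Fin 2) (Fin 2) ℂ) =
    (-1 : ℂ) ^ (k + p - 1) * (y ^ 2 - 4) * chebS (p - 1) y := by
  have hW := coe_twoBridgeWord (show 1 ≤ p by omega) q hX hX'
  rw [← Int.cast_prod, prod_twoBridgeSign_eq_neg_one_pow hq_odd hq2, ← hk] at hW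
  have hdet : ((X' * X : Matrix (Fin 2) (Fin 2) ℂ)).det = 1 := by
    rw [det_mul, X'.det_coe, X.det_coe, one_mul]
  have htrace : trace (X' * X : Matrix (Fin 2) (Fin 2) ℂ) = -y := by
    rw [hy, neg_neg, trace_mul_comm]
    rfl
  rw [SpecialLinearGroup.trace_conj_mul_inv_sub_trace_mul_inv hX hX' hW,
    trace_pow_add_two_sub_trace_pow_eq_chebS hdet, htrace, chebS_neg,
    show k + p - 1 = k + (p - 1) by omega, pow_add]
  push_cast
  ring

/-- For the two-bridge link `b(2p, q)` with `q` odd, `1 ≤ q < 2p`, `gcd(q, 2p) = 1`,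
traceless `X, X' ∈ SL₂(ℂ)`, `ȳ = −tr(XX')`, and `k` the number of `1 ≤ j ≤ 2p−2` with
`ε_j = −1`, one has
`tr(X⁻¹·W·X·(X')⁻¹) − tr(W·(X')⁻¹) = (−1)^{k+p−1}·(ȳ² − 4)·S_{p−1}(ȳ)`. -/
theorem twoBridge_trace_difference (p q : ℕ) (hp : 1 ≤ p) (hq_odd : Odd q)
    (hq1 : 1 ≤ q) (hq2 : q < 2 * p) (hgcd : Nat.gcd q (2 * p) = 1)
    (X X' : Matrix.SpecialLinearGroup (Fin 2) ℂ)
    (hX : Matrix.trace (X : Matrix (Fin 2) (Fin 2) ℂ) = 0)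
    (hX' : Matrix.trace ((X' : Matrix (Fin 2) (Fin 2) ℂ)) = 0)
    (y : ℂ)
    (hy : y = -Matrix.trace ((X * X' : Matrix.SpecialLinearGroup (Fin 2) ℂ) :
      Matrix (Fin 2) (Fin 2) ℂ))
    (k : ℕ)
    (hk : k = ((Finset.Icc 1 (2 * p - 2)).filter fun j => twoBridgeSign p q j = -1).card) :
    Matrix.trace ((X⁻¹ * twoBridgeWord p q X X' * X * X'⁻¹ :
        Matrix.SpecialLinearGroup (Fin 2) ℂ) : Matrix (Fin 2) (Fin 2) ℂ) -
      Matrix.trace ((twoBridgeWord p q X X' * X'⁻¹ :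
        Matrix.SpecialLinearGroup (Fin 2) ℂ) : Matrix (Fin 2) (Fin 2) ℂ) =
    (-1 : ℂ) ^ (k + p - 1) * (y ^ 2 - 4) * chebS (p - 1) y :=
  twoBridge_trace_difference_general p q hq_odd hq2 X X' hX hX' y hy k hk
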